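/- (Two-step reformulation of M1.) Let B, E : ℂ³ → ℂ³ and F(x) = [[B̃(x), −iE(x)],[iE(x)ᵀ, 0]]. Let h ∈ ℝ and let (y_n, u_n), n ≥ 0, be generated by the M1 scheme y_{n+1} = y_n + h·exp((h/2)F(x_n))·u_n, u_{n+1} = exp((h/2)F(x_{n+1}))·exp((h/2)F(x_n))·u_n, with x_n the first three components of y_n. Then for all n ≥ 1: y_{n+1} − 2y_n + y_{n−1} = h·(exp((h/2)F(x_n)) − exp(−(h/2)F(x_n)))·u_n and y_{n+1} − y_{n−1} = h·(exp((h/2)F(x_n)) + exp(−(h/2)F(x_n)))·u_n. -/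

import Mathlib

open Matrix

/-- The 4×4 complex field matrix `F(x) = [[B̃(x), −iE(x)],[iE(x)ᵀ, 0]]`,
where `B̃(x)α = α × B(x)`, for complex field functions `B, E`. -/
noncomputable def FmatC (B E : (Fin 3 → ℂ) → (Fin 3 → ℂ)) (x : Fin 3 → ℂ) :
    Matrix (Fin 4) (Fin 4) ℂ :=
  !![0, B x 2, -B x 1, -Complex.I * E x 0;
     -B x 2, 0, B x 0, -Complex.I * E x 1;
     B x 1, -B x 0, 0, -Complex.I * E x 2;
     Complex.I * E x 0, Complex.I * E x 1, Complex.I * E x 2, 0]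


/-- The spatial part (first three components) of a 4-vector. -/
def spatial (y : Fin 4 → ℂ) : Fin 3 → ℂ := fun i => y i.castSucc

section StrangSplitting

variable {m 𝕂 : Type*} [Fintype m] [DecidableEq m]

theorem Matrix.exp_neg_mulVec_exp_mulVec {𝔸 : Type*} [NormedRing 𝔸] [NormedAlgebra ℚ 𝔸]
    [CompleteSpace 𝔸] (A : Matrix m m 𝔸) (v : m → 𝔸) :
    NormedSpace.exp (-A) *ᵥ (NormedSpace.exp A *ᵥ v) = v := by
  rw [mulVec_mulVec, ← exp_add_of_commute (-A) A (Commute.refl A).neg_left, neg_add_cancel,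
    NormedSpace.exp_zero, one_mulVec]

variable [NormedField 𝕂] [NormedAlgebra ℚ 𝕂] [CompleteSpace 𝕂]
  (F : (m → 𝕂) → Matrix m m 𝕂) (h : 𝕂) {y u : ℕ → m → 𝕂}

/-- The Strang-splitting scheme with state-dependent generator `F` is time-reversible: the step
from `n + 1` back to `n` is the forward step with `h` replaced by `-h`. -/
theorem strangSplitting_backward_step
    (hy : ∀ n, y (n + 1) = y n + h • (NormedSpace.exp ((h / 2) • F (y n)) *ᵥ u n))
    (hu : ∀ n, u (n + 1) = NormedSpace.exp ((h / 2) • F (y (n + 1))) *ᵥ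
      (NormedSpace.exp ((h / 2) • F (y n)) *ᵥ u n)) (n : ℕ) :
    y n = y (n + 1) - h • (NormedSpace.exp (-(h / 2) • F (y (n + 1))) *ᵥ u (n + 1)) := by
  rw [hu n, neg_smul, Matrix.exp_neg_mulVec_exp_mulVec, hy n, add_sub_cancel_right]

theorem strangSplitting_two_step
    (hy : ∀ n, y (n + 1) = y n + h • (NormedSpace.exp ((h / 2) • F (y n)) *ᵥ u n))
    (hu : ∀ n, u (n + 1) = NormedSpace.exp ((h / 2) • F (y (n + 1))) *ᵥ
      (NormedSpace.exp ((h / 2) • F (y n)) *ᵥ u n)) (n : ℕ) :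
    (y (n + 2) - (2 : 𝕂) • y (n + 1) + y n = h •
      ((NormedSpace.exp ((h / 2) • F (y (n + 1))) -
        NormedSpace.exp (-(h / 2) • F (y (n + 1)))) *ᵥ u (n + 1))) ∧
    (y (n + 2) - y n = h •
      ((NormedSpace.exp ((h / 2) • F (y (n + 1))) +
        NormedSpace.exp (-(h / 2) • F (y (n + 1)))) *ᵥ u (n + 1))) := by
  rw [sub_mulVec, add_mulVec, smul_sub, smul_add, hy (n + 1),
    strangSplitting_backward_step F h hy hu n]
  constructor <;> module

end StrangSplitting

/-- Two-step reformulation of M1: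
`y_{n+1} − 2y_n + y_{n−1} = h(exp((h/2)F(x_n)) − exp(−(h/2)F(x_n)))u_n` and
`y_{n+1} − y_{n−1} = h(exp((h/2)F(x_n)) + exp(−(h/2)F(x_n)))u_n`. -/
theorem M1_two_step_form (B E : (Fin 3 → ℂ) → (Fin 3 → ℂ)) (h : ℝ)
    (y u : ℕ → Fin 4 → ℂ)
    (hy : ∀ n, y (n + 1) = y n + (h : ℂ) •
      (NormedSpace.exp (((h : ℂ) / 2) • FmatC B E (spatial (y n))) *ᵥ u n))
    (hu : ∀ n, u (n + 1) =
      NormedSpace.exp (((h : ℂ) / 2) • FmatC B E (spatial (y (n + 1)))) *ᵥ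
        (NormedSpace.exp (((h : ℂ) / 2) • FmatC B E (spatial (y n))) *ᵥ u n)) :
    ∀ n, 1 ≤ n →
      (y (n + 1) - (2 : ℂ) • y n + y (n - 1) = (h : ℂ) •
        ((NormedSpace.exp (((h : ℂ) / 2) • FmatC B E (spatial (y n))) -
          NormedSpace.exp (-((h : ℂ) / 2) • FmatC B E (spatial (y n)))) *ᵥ u n)) ∧
      (y (n + 1) - y (n - 1) = (h : ℂ) •
        ((NormedSpace.exp (((h : ℂ) / 2) • FmatC B E (spatial (y n))) +
          NormedSpace.exp (-((h : ℂ) / 2) • FmatC B E (spatial (y n)))) *ᵥ u n)) := by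
  rintro n hn
  obtain ⟨k, rfl⟩ := Nat.exists_eq_add_of_le' hn
  exact strangSplitting_two_step (fun z => FmatC B E (spatial z)) (h : ℂ) hy hu k
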